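/- Let X, X_1, ..., X_n be i.i.d. points in [0,1], exchangeable as an (n+1)-tuple, and X_{(1)} the nearest neighbor of X among X_1,...,X_n. Then E|X_{(1)} - X|^2 ≤ 2/(n+1). -/

import Mathlib

/-!
Write `r_i` for the distance from the `i`-th of the `n + 1` points to its nearest neighbour.
The intervals of radius `r_i / 2` around the points are pairwise disjoint and lie in
`(-1/2, 3/2)`, so `∑ r_i ≤ 2`, hence `∑ r_i ^ 2 ≤ 2` as `r_i ≤ 1`. By exchangeability all
`n + 1` terms have the same expectation, which is therefore at most `2 / (n + 1)`.
-/

open MeasureTheory ProbabilityTheory Metric Set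

/-- Junk value: `0` when `j` is the only index, the infimum then being over an empty type. -/
noncomputable def nearestNeighborDist {ι : Type*} (x : ι → ℝ) (j : ι) : ℝ :=
  ⨅ k : {k // k ≠ j}, |x k - x j|

section NearestNeighborDist

variable {ι : Type*} (x : ι → ℝ)

theorem nearestNeighborDist_nonneg (j : ι) : 0 ≤ nearestNeighborDist x j :=
  Real.iInf_nonneg fun _ => abs_nonneg _

theorem nearestNeighborDist_le {j k : ι} (hk : k ≠ j) :
    nearestNeighborDist x j ≤ |x k - x j| :=
  ciInf_le (f := fun k : {k // k ≠ j} => |x k - x j|)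
    ⟨0, forall_mem_range.2 fun _ => abs_nonneg _⟩ ⟨k, hk⟩

theorem nearestNeighborDist_le_one (hx : ∀ i, x i ∈ Icc (0 : ℝ) 1) (j : ι) :
    nearestNeighborDist x j ≤ 1 := by
  rcases isEmpty_or_nonempty {k // k ≠ j} with _ | ⟨k, hk⟩
  · simp [nearestNeighborDist]
  · refine (nearestNeighborDist_le x hk).trans (abs_sub_le_iff.2 ⟨?_, ?_⟩) <;>
      linarith [(hx k).1, (hx k).2, (hx j).1, (hx j).2]

theorem nearestNeighborDist_comp_perm (σ : Equiv.Perm ι) (j : ι) :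
    nearestNeighborDist (x ∘ σ) j = nearestNeighborDist x (σ j) := by
  let e : {k // k ≠ j} ≃ {k // k ≠ σ j} := σ.subtypeEquiv fun _ => σ.injective.ne_iff.symm
  exact e.iInf_comp (g := fun k : {k // k ≠ σ j} => |x k - x (σ j)|)

theorem measurable_nearestNeighborDist [Finite ι] (j : ι) :
    Measurable fun x : ι → ℝ => nearestNeighborDist x j :=
  Measurable.iInf fun _ => by fun_prop

theorem iInf_abs_succ_sub_zero {n : ℕ} (x : Fin (n + 1) → ℝ) :
    ⨅ i : Fin n, |x i.succ - x 0| = nearestNeighborDist x 0 := by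
  rw [nearestNeighborDist, ← (finSuccAboveEquiv 0).iInf_comp]
  simp [finSuccAboveEquiv_apply]

end NearestNeighborDist

theorem Real.sum_radius_le_of_pairwise_disjoint_ball {ι : Type*} [Fintype ι] {c ρ : ι → ℝ}
    {a R : ℝ} (hρ : ∀ i, 0 ≤ ρ i) (hR : 0 ≤ R)
    (hdisj : Pairwise (Function.onFun Disjoint fun i => ball (c i) (ρ i)))
    (hsub : ∀ i, ball (c i) (ρ i) ⊆ ball a R) :
    ∑ i, ρ i ≤ R := by
  have hvol : volume (⋃ i, ball (c i) (ρ i)) ≤ volume (ball a R) :=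
    measure_mono (iUnion_subset hsub)
  rw [measure_iUnion hdisj fun _ => measurableSet_ball, tsum_fintype] at hvol
  simp only [Real.volume_ball] at hvol
  rw [← ENNReal.ofReal_sum_of_nonneg fun i _ => by linarith [hρ i],
    ENNReal.ofReal_le_ofReal_iff (by linarith), ← Finset.mul_sum] at hvol
  linarith

theorem sum_nearestNeighborDist_le_two {ι : Type*} [Fintype ι] (x : ι → ℝ)
    (hx : ∀ i, x i ∈ Icc (0 : ℝ) 1) :
    ∑ j, nearestNeighborDist x j ≤ 2 := by
  have hdisj : Pairwise (Function.onFun Disjoint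
      fun j => ball (x j) (nearestNeighborDist x j / 2)) := by
    intro i j hij
    refine ball_disjoint_ball ?_
    have hi := nearestNeighborDist_le x hij.symm
    have hj := nearestNeighborDist_le x hij
    rw [Real.dist_eq]
    linarith [abs_sub_comm (x i) (x j)]
  have hsub : ∀ j, ball (x j) (nearestNeighborDist x j / 2) ⊆ ball (1 / 2) 1 := by
    intro j
    refine ball_subset_ball' ?_
    have hdist : |x j - 1 / 2| ≤ 1 / 2 :=
      abs_sub_le_iff.2 ⟨by linarith [(hx j).2], by linarith [(hx j).1]⟩
    rw [Real.dist_eq]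
    linarith [nearestNeighborDist_le_one x hx j]
  have := Real.sum_radius_le_of_pairwise_disjoint_ball
    (fun j => by linarith [nearestNeighborDist_nonneg x j]) zero_le_one hdisj hsub
  rw [← Finset.sum_div] at this
  linarith

theorem sum_nearestNeighborDist_sq_le_two {ι : Type*} [Fintype ι] (x : ι → ℝ)
    (hx : ∀ i, x i ∈ Icc (0 : ℝ) 1) :
    ∑ j, nearestNeighborDist x j ^ 2 ≤ 2 := by
  refine le_trans (Finset.sum_le_sum fun j _ => ?_) (sum_nearestNeighborDist_le_two x hx)
  have h0 := nearestNeighborDist_nonneg x j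
  have h1 := nearestNeighborDist_le_one x hx j
  nlinarith

theorem ProbabilityTheory.iIndepFun.identDistrib_comp_perm {ι Ω β : Type*} [Fintype ι]
    [MeasurableSpace Ω] [MeasurableSpace β] {μ : Measure Ω} {Y : ι → Ω → β}
    (hiid : iIndepFun Y μ) (hid : ∀ i j, IdentDistrib (Y i) (Y j) μ μ) (σ : Equiv.Perm ι) :
    IdentDistrib (fun ω i => Y (σ i) ω) (fun ω i => Y i ω) μ μ := by
  have hY : ∀ i, AEMeasurable (Y i) μ := fun i => (hid i i).aemeasurable_fst
  refine ⟨aemeasurable_pi_lambda _ fun i => hY (σ i), aemeasurable_pi_lambda _ hY, ?_⟩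
  rw [(hiid.precomp σ.injective).map_fun_eq_pi_map fun i => hY (σ i),
    hiid.map_fun_eq_pi_map hY]
  exact congrArg Measure.pi (funext fun i => (hid (σ i) i).map_eq)

theorem card_mul_integral_nearestNeighborDist_sq_le {ι Ω : Type*} [Fintype ι]
    [MeasurableSpace Ω] {μ : Measure Ω} [IsProbabilityMeasure μ] {X : Ω → ι → ℝ}
    (hexch : ∀ σ : Equiv.Perm ι, IdentDistrib (fun ω => X ω ∘ σ) X μ μ)
    (hX : ∀ ω i, X ω i ∈ Icc (0 : ℝ) 1) (j : ι) :
    Fintype.card ι * ∫ ω, nearestNeighborDist (X ω) j ^ 2 ∂μ ≤ 2 := by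
  classical
  have hmeas : ∀ k, Measurable fun x : ι → ℝ => nearestNeighborDist x k ^ 2 :=
    fun k => (measurable_nearestNeighborDist k).pow_const 2
  have hsame : ∀ k, ∫ ω, nearestNeighborDist (X ω) k ^ 2 ∂μ
      = ∫ ω, nearestNeighborDist (X ω) j ^ 2 ∂μ := by
    intro k
    have hswap : ∀ ω, nearestNeighborDist (fun i => X ω (Equiv.swap j k i)) j
        = nearestNeighborDist (X ω) k :=
      fun ω => (nearestNeighborDist_comp_perm (X ω) _ j).trans (by rw [Equiv.swap_apply_left])
    simpa only [Function.comp_def, hswap] using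
      ((hexch (Equiv.swap j k)).comp (hmeas j)).integral_eq
  have hint : ∀ k, Integrable (fun ω => nearestNeighborDist (X ω) k ^ 2) μ := by
    refine fun k => .of_bound ((hmeas k).comp_aemeasurable
      (hexch 1).aemeasurable_snd).aestronglyMeasurable 1 (.of_forall fun ω => ?_)
    rw [Real.norm_eq_abs, abs_of_nonneg (sq_nonneg _)]
    exact pow_le_one₀ (nearestNeighborDist_nonneg _ k) (nearestNeighborDist_le_one _ (hX ω) k)
  calc Fintype.card ι * ∫ ω, nearestNeighborDist (X ω) j ^ 2 ∂μ
      = ∑ k, ∫ ω, nearestNeighborDist (X ω) k ^ 2 ∂μ := by simp [hsame]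
    _ = ∫ ω, ∑ k, nearestNeighborDist (X ω) k ^ 2 ∂μ :=
      (integral_finsetSum _ fun k _ => hint k).symm
    _ ≤ ∫ _, (2 : ℝ) ∂μ :=
      integral_mono (integrable_finsetSum _ fun k _ => hint k) (integrable_const _)
        fun ω => sum_nearestNeighborDist_sq_le_two _ (hX ω)
    _ = 2 := by simp

theorem stmt_3_general (n : ℕ)
    {Ω : Type*} [MeasurableSpace Ω] (μ : Measure Ω) [IsProbabilityMeasure μ]
    (Y : Fin (n + 1) → Ω → ℝ)
    (hiid : iIndepFun Y μ)
    (hid : ∀ i j, IdentDistrib (Y i) (Y j) μ μ)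
    (hcube : ∀ i, ∀ ω, Y i ω ∈ Set.Icc (0 : ℝ) 1) :
    ∫ ω, (⨅ i : Fin n, |Y i.succ ω - Y 0 ω|) ^ 2 ∂μ ≤ 2 / (n + 1 : ℝ) := by
  have hbound := card_mul_integral_nearestNeighborDist_sq_le (X := fun ω i => Y i ω)
    (hiid.identDistrib_comp_perm hid) (fun ω i => hcube i ω) 0
  have hnn : ∀ ω, ⨅ i : Fin n, |Y i.succ ω - Y 0 ω| = nearestNeighborDist (fun i => Y i ω) 0 :=
    fun ω => iInf_abs_succ_sub_zero fun i => Y i ω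
  simp only [hnn, Fintype.card_fin, Nat.cast_add, Nat.cast_one] at hbound ⊢
  rw [le_div_iff₀ (by positivity)]
  linarith

/-- One-dimensional case: i.i.d. points in `[0,1]`; the expected squared
nearest-neighbor distance is at most `2/(n+1)`. -/
theorem stmt_3 (n : ℕ) (hn : 1 ≤ n)
    {Ω : Type*} [MeasurableSpace Ω] (μ : Measure Ω) [IsProbabilityMeasure μ]
    (Y : Fin (n + 1) → Ω → ℝ) (hY : ∀ i, Measurable (Y i))
    (hiid : iIndepFun Y μ)
    (hid : ∀ i j, IdentDistrib (Y i) (Y j) μ μ)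
    (hcube : ∀ i, ∀ ω, Y i ω ∈ Set.Icc (0 : ℝ) 1) :
    ∫ ω, (⨅ i : Fin n, |Y i.succ ω - Y 0 ω|) ^ 2 ∂μ ≤ 2 / (n + 1 : ℝ) :=
  stmt_3_general n μ Y hiid hid hcube
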